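/- Fix an even integer j ≥ 2. There exist a constant C > 0 and an integer N such that for every integer n ≥ N and every real number x with |x| ≤ √((j−1)(n−j+2)) + √((j−2)(n−j+3)), the value of the polynomial q_j at x satisfies |q_j(x)| ≤ C · n^{j/2}. -/
import Mathlib


/-- for fixed even `j ≥ 2`, on the interval
`|x| ≤ √((j-1)(n-j+2)) + √((j-2)(n-j+3))` one has `|q_j(x)| = O(n^{j/2})`. -/
theorem abs_q_le_of_fixed_j (j : ℕ) (hj2 : 2 ≤ j) (hje : Even j) :
    ∃ C : ℝ, 0 < C ∧ ∃ N : ℕ, ∀ n : ℕ, N ≤ n →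
      ∀ q : ℕ → Polynomial ℚ,
        q 0 = 1 → q 1 = Polynomial.X →
        (∀ i : ℕ, 1 ≤ i → i ≤ n - 1 →
          Polynomial.X * q i =
            Polynomial.C ((i : ℚ) + 1) * q (i + 1) +
            Polynomial.C ((n : ℚ) - (i : ℚ) + 1) * q (i - 1)) →
        ∀ x : ℝ,
          |x| ≤ Real.sqrt (((j : ℝ) - 1) * ((n : ℝ) - (j : ℝ) + 2)) +
                Real.sqrt (((j : ℝ) - 2) * ((n : ℝ) - (j : ℝ) + 3)) →
          |Polynomial.aeval x (q j)| ≤ C * (n : ℝ) ^ (j / 2) := by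
  set t : ℝ := Real.sqrt j with ht
  have ht0 : (0 : ℝ) ≤ t := Real.sqrt_nonneg _
  set M : ℝ := 2 * t + 2 with hMdef
  have hM2 : (2 : ℝ) ≤ M := by simp only [hMdef]; linarith
  have hM0 : (0 : ℝ) < M := by linarith
  refine ⟨M ^ j, by positivity, j, ?_⟩
  intro n hn q h0 h1 hrec x hx
  have hjR : (2 : ℝ) ≤ (j : ℝ) := by exact_mod_cast hj2
  have hnR : (j : ℝ) ≤ (n : ℝ) := by exact_mod_cast hn
  have hn2 : (2 : ℝ) ≤ (n : ℝ) := le_trans hjR hnR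
  set s : ℝ := Real.sqrt n with hs
  have hs0 : (0 : ℝ) ≤ s := Real.sqrt_nonneg _
  have hs2 : s ^ 2 = (n : ℝ) := Real.sq_sqrt (by positivity)
  -- bound |x| ≤ 2 t s
  have hx2 : |x| ≤ 2 * t * s := by
    have hA : Real.sqrt (((j : ℝ) - 1) * ((n : ℝ) - (j : ℝ) + 2)) ≤ Real.sqrt ((j : ℝ) * n) := by
      apply Real.sqrt_le_sqrt
      nlinarith [sq_nonneg ((j : ℝ) - 2)]
    have hB : Real.sqrt (((j : ℝ) - 2) * ((n : ℝ) - (j : ℝ) + 3)) ≤ Real.sqrt ((j : ℝ) * n) := by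
      apply Real.sqrt_le_sqrt
      nlinarith [sq_nonneg ((j : ℝ) - 5 / 2)]
    have hmul : Real.sqrt ((j : ℝ) * n) = t * s := by
      rw [ht, hs, ← Real.sqrt_mul (by positivity)]
    calc |x| ≤ Real.sqrt (((j : ℝ) - 1) * ((n : ℝ) - (j : ℝ) + 2)) +
        Real.sqrt (((j : ℝ) - 2) * ((n : ℝ) - (j : ℝ) + 3)) := hx
      _ ≤ Real.sqrt ((j : ℝ) * n) + Real.sqrt ((j : ℝ) * n) := by linarith
      _ = 2 * t * s := by rw [hmul]; ring
  -- main induction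
  have key : ∀ i : ℕ, i ≤ j → |Polynomial.aeval x (q i)| ≤ M ^ i * s ^ i := by
    intro i
    induction i using Nat.strong_induction_on with
    | _ i ih =>
      match i, ih with
      | 0, _ => intro _; simp [h0]
      | 1, _ =>
        intro _
        simp only [h1, Polynomial.aeval_X, pow_one]
        calc |x| ≤ 2 * t * s := hx2
          _ ≤ M * s := by
            have h2t : 2 * t ≤ M := by rw [hMdef]; linarith
            exact mul_le_mul_of_nonneg_right h2t hs0
      | (k + 2), ih =>
        intro hk
        have hb := ih (k + 1) (by omega) (by omega)
        have ha := ih k (by omega) (by omega)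
        have hrk := hrec (k + 1) (by omega) (by omega)
        have heq := congrArg (Polynomial.aeval x) hrk
        simp only [Nat.add_sub_cancel, map_add, map_mul, Polynomial.aeval_X,
          Polynomial.aeval_C, eq_ratCast] at heq
        push_cast at heq
        set a := Polynomial.aeval x (q k) with hadef
        set b := Polynomial.aeval x (q (k + 1)) with hbdef
        set c := Polynomial.aeval x (q (k + 2)) with hcdef
        have heq' : ((k : ℝ) + 2) * c = x * b - ((n : ℝ) - (k : ℝ)) * a := by
          linear_combination -heq
        have hnk0 : (0 : ℝ) ≤ (n : ℝ) - (k : ℝ) := by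
          have : (k : ℝ) ≤ (j : ℝ) := by exact_mod_cast (by omega : k ≤ j)
          linarith
        have hk0 : (0 : ℝ) ≤ (k : ℝ) := Nat.cast_nonneg k
        have hctri : |c| ≤ |x| * |b| + ((n : ℝ) - (k : ℝ)) * |a| := by
          have h1' : |((k : ℝ) + 2) * c| ≤ |x * b| + |((n : ℝ) - (k : ℝ)) * a| := by
            rw [heq', sub_eq_add_neg]
            exact le_trans (abs_add_le _ _) (by rw [abs_neg])
          rw [abs_mul, abs_mul, abs_mul, abs_of_nonneg (by linarith : (0:ℝ) ≤ (k:ℝ)+2),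
            abs_of_nonneg hnk0] at h1'
          have h2' : |c| ≤ ((k : ℝ) + 2) * |c| :=
            le_mul_of_one_le_left (abs_nonneg c) (by linarith)
          linarith
        have hxb : |x| * |b| ≤ (2 * t * M ^ (k + 1)) * s ^ (k + 2) := by
          calc |x| * |b| ≤ (2 * t * s) * (M ^ (k + 1) * s ^ (k + 1)) :=
              mul_le_mul hx2 hb (abs_nonneg _) (by positivity)
            _ = (2 * t * M ^ (k + 1)) * s ^ (k + 2) := by ring
        have hna : ((n : ℝ) - (k : ℝ)) * |a| ≤ M ^ k * s ^ (k + 2) := by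
          have hle : (n : ℝ) - (k : ℝ) ≤ s ^ 2 := by rw [hs2]; linarith
          calc ((n : ℝ) - (k : ℝ)) * |a| ≤ s ^ 2 * (M ^ k * s ^ k) :=
              mul_le_mul hle ha (abs_nonneg _) (by positivity)
            _ = M ^ k * s ^ (k + 2) := by ring
        have hcoef : 2 * t * M ^ (k + 1) + M ^ k ≤ M ^ (k + 2) := by
          have h1 : M ^ k ≤ M ^ (k + 1) := pow_le_pow_right₀ (by linarith) (by omega)
          have h2 : M ^ (k + 2) = 2 * t * M ^ (k + 1) + 2 * M ^ (k + 1) := by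
            rw [hMdef]; ring
          have h3 : (0 : ℝ) ≤ M ^ (k + 1) := by positivity
          linarith
        calc |c| ≤ |x| * |b| + ((n : ℝ) - (k : ℝ)) * |a| := hctri
          _ ≤ (2 * t * M ^ (k + 1)) * s ^ (k + 2) + M ^ k * s ^ (k + 2) :=
            add_le_add hxb hna
          _ = (2 * t * M ^ (k + 1) + M ^ k) * s ^ (k + 2) := by ring
          _ ≤ M ^ (k + 2) * s ^ (k + 2) :=
            mul_le_mul_of_nonneg_right hcoef (by positivity)
  have hfin := key j le_rfl
  have hsj : s ^ j = (n : ℝ) ^ (j / 2) := by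
    obtain ⟨m, hm⟩ := hje
    have hjm : j = 2 * m := by omega
    have hjd : j / 2 = m := by omega
    have h : s ^ j = (s ^ 2) ^ m := by rw [hjm, pow_mul]
    rw [h, hs2, hjd]
  rw [hsj] at hfin
  exact hfin
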